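/- arXiv:1611.05312 — 3 statements merged into one kernel-verified Lean document; each statement's English description precedes it below -/
import Mathlib

section
/- Let A be a commutative real algebra whose spectrum is a smooth manifold with structure sheaf S_A. If X is a derivation of A that is smooth over an open set Ω of the spectrum, then there is a unique vector field X̂ on Ω compatible with X, meaning that X̂(â|_Ω) = (X(a))^|_Ω for all a ∈ A. -/
/- The spectrum of a commutative real algebra `A`: the set of characters, i.e. nonzero
`ℝ`-algebra homomorphisms `A → ℝ`.  (Unital algebra homomorphisms send `1` to `1` and
hence are automatically nonzero, so characters are exactly the elements of
`A →ₐ[ℝ] ℝ`.)  It carries the topology of pointwise convergence, i.e. the topology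
induced from the product topology via `φ ↦ (φ a)_{a ∈ A}` — the weakest topology
making every evaluation `â : φ ↦ φ a` continuous. -/
noncomputable instance spectrumTopology (A : Type*) [CommRing A] [Algebra ℝ A] :
    TopologicalSpace (A →ₐ[ℝ] ℝ) :=
  TopologicalSpace.induced (fun φ : A →ₐ[ℝ] ℝ => (φ : A → ℝ)) inferInstance

/-- The structure sheaf `S_A`: its sections over an open `Ω` in the spectrum are the
continuous functions that are locally of the form `g(â₁, …, â_k)` with `g` smooth on
`ℝ^k` — this is the smallest subsheaf of the sheaf of continuous real-valued functions
on the spectrum containing all global sections `g(â₁, …, â_k)`. -/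
def structureSheaf {A : Type*} [CommRing A] [Algebra ℝ A]
    (Ω : Set (A →ₐ[ℝ] ℝ)) : Set ((A →ₐ[ℝ] ℝ) → ℝ) :=
  {f | ContinuousOn f Ω ∧ ∀ φ ∈ Ω, ∃ U : Set (A →ₐ[ℝ] ℝ), IsOpen U ∧ φ ∈ U ∧
    ∃ (k : ℕ) (a : Fin k → A) (g : (Fin k → ℝ) → ℝ), ContDiff ℝ (⊤ : ℕ∞) g ∧
      ∀ ψ ∈ U ∩ Ω, f ψ = g (fun i => ψ (a i))}

/-- `a₁, …, a_n ∈ A` smoothly generate `S_A(Ω)`: every `f ∈ S_A(Ω)` equals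
`g(â₁, …, â_n)` on `Ω` for some smooth `g` on `ℝ^n`. -/
def SmoothlyGenerates {A : Type*} [CommRing A] [Algebra ℝ A]
    {n : ℕ} (a : Fin n → A) (Ω : Set (A →ₐ[ℝ] ℝ)) : Prop :=
  ∀ f ∈ structureSheaf Ω, ∃ g : (Fin n → ℝ) → ℝ, ContDiff ℝ (⊤ : ℕ∞) g ∧
    ∀ φ ∈ Ω, f φ = g (fun i => φ (a i))

/-- `h` restricts to a homeomorphism from `Ω` onto `W`. -/
def IsHomeoOnto {X Y : Type*} [TopologicalSpace X] [TopologicalSpace Y]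
    (h : X → Y) (Ω : Set X) (W : Set Y) : Prop :=
  ContinuousOn h Ω ∧ Set.BijOn h Ω W ∧
    ∃ h' : Y → X, ContinuousOn h' W ∧ ∀ x ∈ Ω, h' (h x) = x

/-- The spectrum of `A` is a smooth `n`-manifold with `S_A` equal to its sheaf of
smooth functions: every point has a chart — an open neighborhood `Ω` homeomorphic to
an open set `W ⊆ ℝ^n` — under which, for every open `Λ ⊆ Ω`, the sections of `S_A`
over `Λ` correspond exactly to the smooth functions on the image of `Λ`. -/
def IsSmoothManifoldWithStructureSheaf (A : Type*) [CommRing A] [Algebra ℝ A]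
    (n : ℕ) : Prop :=
  ∀ φ : A →ₐ[ℝ] ℝ, ∃ (Ω : Set (A →ₐ[ℝ] ℝ)) (h : (A →ₐ[ℝ] ℝ) → Fin n → ℝ)
    (W : Set (Fin n → ℝ)), IsOpen Ω ∧ φ ∈ Ω ∧ IsOpen W ∧ IsHomeoOnto h Ω W ∧
    ∀ Λ : Set (A →ₐ[ℝ] ℝ), IsOpen Λ → Λ ⊆ Ω → ∀ f : (A →ₐ[ℝ] ℝ) → ℝ,
      (f ∈ structureSheaf Λ ↔ ∃ g : (Fin n → ℝ) → ℝ,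
        ContDiffOn ℝ (⊤ : ℕ∞) g (h '' Λ) ∧ ∀ ψ ∈ Λ, f ψ = g (h ψ))


/-- A derivation `X` of `A` is smooth over an open subset `Ω` of the spectrum: for
every open `Λ ⊆ Ω`, every identity `â = g(â₁, …, â_k)` of functions over `Λ` (with
`g` smooth) implies the chain-rule identity
`(X a)^ = Σ_i (X aᵢ)^ · gᵢ(â₁, …, â_k)` over `Λ`, where `gᵢ` is the `i`-th partial
derivative of `g`. -/
def SmoothOver {A : Type*} [CommRing A] [Algebra ℝ A]
    (X : Derivation ℝ A A) (Ω : Set (A →ₐ[ℝ] ℝ)) : Prop :=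
  ∀ Λ : Set (A →ₐ[ℝ] ℝ), IsOpen Λ → Λ ⊆ Ω →
    ∀ (a : A) (k : ℕ) (as : Fin k → A) (g : (Fin k → ℝ) → ℝ), ContDiff ℝ (⊤ : ℕ∞) g →
      (∀ ψ ∈ Λ, ψ a = g (fun i => ψ (as i))) →
      ∀ ψ ∈ Λ, ψ (X a)
        = ∑ i, ψ (X (as i)) * fderiv ℝ g (fun i => ψ (as i)) (Pi.single i 1)

/-- `L` is (the action on functions of) a vector field on `Ω`: an operator on functions
on the spectrum which satisfies the chain rule against smooth composites of sections of
the structure sheaf over `Ω`. -/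
def IsVectorFieldOn {A : Type*} [CommRing A] [Algebra ℝ A]
    (L : ((A →ₐ[ℝ] ℝ) → ℝ) → ((A →ₐ[ℝ] ℝ) → ℝ)) (Ω : Set (A →ₐ[ℝ] ℝ)) : Prop :=
  ∀ Λ : Set (A →ₐ[ℝ] ℝ), IsOpen Λ → Λ ⊆ Ω →
    ∀ (f : (A →ₐ[ℝ] ℝ) → ℝ) (k : ℕ) (fs : Fin k → (A →ₐ[ℝ] ℝ) → ℝ)
      (g : (Fin k → ℝ) → ℝ), f ∈ structureSheaf Ω → (∀ i, fs i ∈ structureSheaf Ω) →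
      ContDiff ℝ (⊤ : ℕ∞) g → (∀ ψ ∈ Λ, f ψ = g (fun i => fs i ψ)) →
      ∀ ψ ∈ Λ, L f ψ
        = ∑ i, L (fs i) ψ * fderiv ℝ g (fun i => fs i ψ) (Pi.single i 1)

section Aux

variable {A : Type*} [CommRing A] [Algebra ℝ A]

/-- Precomposition with a map of index types, as a continuous linear map. -/
noncomputable def precompCLM {ι κ : Type*} [Fintype κ] (e : ι → κ) :
    ((κ → ℝ) →L[ℝ] (ι → ℝ)) :=
  ContinuousLinearMap.pi (fun i => ContinuousLinearMap.proj (e i))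

@[simp] lemma precompCLM_apply {ι κ : Type*} [Fintype κ] (e : ι → κ)
    (x : κ → ℝ) (i : ι) : precompCLM e x i = x (e i) := rfl

lemma precompCLM_single {ι κ : Type*} [Fintype κ] [DecidableEq ι] [DecidableEq κ]
    {e : ι → κ} (he : Function.Injective e) (j : ι) :
    precompCLM e (Pi.single (e j) 1) = Pi.single j (1 : ℝ) := by
  funext i
  simp only [precompCLM_apply, Pi.single_apply]
  by_cases h : i = j
  · subst h; simp
  · rw [if_neg (fun hh => h (he hh)), if_neg h]

lemma precompCLM_single_notMem {ι κ : Type*} [Fintype κ] [DecidableEq κ]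
    {e : ι → κ} {c : κ} (hc : ∀ i, e i ≠ c) :
    precompCLM e (Pi.single c 1) = (0 : ι → ℝ) := by
  funext i
  simp only [precompCLM_apply, Pi.single_apply, Pi.zero_apply]
  rw [if_neg (hc i)]

/-- Lemma A: `SmoothOver` with an arbitrary finite index type. -/
lemma smoothOver_general {X : Derivation ℝ A A} {Ω : Set (A →ₐ[ℝ] ℝ)}
    (hX : SmoothOver X Ω) {Λ : Set (A →ₐ[ℝ] ℝ)} (hΛo : IsOpen Λ) (hΛΩ : Λ ⊆ Ω)
    (a : A) {ι : Type} [Fintype ι] [DecidableEq ι]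
    (as : ι → A) (g : (ι → ℝ) → ℝ) (hg : ContDiff ℝ (⊤ : ℕ∞) g)
    (heq : ∀ ψ ∈ Λ, ψ a = g (fun i => ψ (as i))) :
    ∀ ψ ∈ Λ, ψ (X a)
      = ∑ i, ψ (X (as i)) * fderiv ℝ g (fun i => ψ (as i)) (Pi.single i 1) := by
  classical
  set N := Fintype.card ι
  set e : ι ≃ Fin N := Fintype.equivFin ι with he
  set T : (Fin N → ℝ) →L[ℝ] (ι → ℝ) := precompCLM (fun i => e i) with hT
  set g' : (Fin N → ℝ) → ℝ := fun x => g (T x) with hg'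
  have hg'c : ContDiff ℝ (⊤ : ℕ∞) g' := hg.comp T.contDiff
  have key := hX Λ hΛo hΛΩ a N (fun j => as (e.symm j)) g' hg'c ?_
  · intro ψ hψ
    have hpt : T (fun j => ψ (as (e.symm j))) = fun i => ψ (as i) := by
      funext i
      show ψ (as (e.symm (e i))) = ψ (as i)
      rw [Equiv.symm_apply_apply]
    have hfd : fderiv ℝ g' (fun j => ψ (as (e.symm j)))
        = (fderiv ℝ g (fun i => ψ (as i))).comp T := by
      have := fderiv_comp (g := g) (f := T) (fun j => ψ (as (e.symm j)))
        ((hg.differentiable (by simp)).differentiableAt) T.differentiableAt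
      rw [hg']
      rw [show (fun x => g (T x)) = g ∘ T from rfl, this, T.fderiv, hpt]
    rw [key ψ hψ]
    rw [hfd]
    have : ∀ j : Fin N, T (Pi.single j 1) = Pi.single (e.symm j) (1:ℝ) := by
      intro j
      have := precompCLM_single (ι := ι) (κ := Fin N) (e := fun i => e i)
        (fun x y hxy => e.injective hxy) (e.symm j)
      simpa using this
    calc ∑ j, ψ (X (as (e.symm j)))
          * ((fderiv ℝ g (fun i => ψ (as i))).comp T) (Pi.single j 1)
        = ∑ j, ψ (X (as (e.symm j)))
          * fderiv ℝ g (fun i => ψ (as i)) (Pi.single (e.symm j) 1) := by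
          refine Finset.sum_congr rfl fun j _ => ?_
          rw [ContinuousLinearMap.comp_apply, this j]
      _ = ∑ i, ψ (X (as i)) * fderiv ℝ g (fun i => ψ (as i)) (Pi.single i 1) :=
          Equiv.sum_comp e.symm
            (fun i => ψ (X (as i)) * fderiv ℝ g (fun i => ψ (as i)) (Pi.single i 1))
  · intro ψ hψ
    rw [heq ψ hψ, hg']
    congr 1
    funext i
    show ψ (as i) = ψ (as (e.symm (e i)))
    rw [Equiv.symm_apply_apply]


/-- Lemma B: any two local smooth representations of the same function give the same
derivation sum. -/
lemma rep_welldef {X : Derivation ℝ A A} {Ω : Set (A →ₐ[ℝ] ℝ)}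
    (hX : SmoothOver X Ω) {Λ : Set (A →ₐ[ℝ] ℝ)} (hΛo : IsOpen Λ) (hΛΩ : Λ ⊆ Ω)
    {ι κ : Type} [Fintype ι] [DecidableEq ι] [Fintype κ] [DecidableEq κ]
    (as : ι → A) (g : (ι → ℝ) → ℝ) (hg : ContDiff ℝ (⊤ : ℕ∞) g)
    (bs : κ → A) (g' : (κ → ℝ) → ℝ) (hg' : ContDiff ℝ (⊤ : ℕ∞) g')
    (heq : ∀ ψ ∈ Λ, g (fun i => ψ (as i)) = g' (fun j => ψ (bs j))) :
    ∀ ψ ∈ Λ, ∑ i, ψ (X (as i)) * fderiv ℝ g (fun i => ψ (as i)) (Pi.single i 1)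
      = ∑ j, ψ (X (bs j)) * fderiv ℝ g' (fun j => ψ (bs j)) (Pi.single j 1) := by
  classical
  set T1 : ((ι ⊕ κ) → ℝ) →L[ℝ] (ι → ℝ) := precompCLM Sum.inl with hT1
  set T2 : ((ι ⊕ κ) → ℝ) →L[ℝ] (κ → ℝ) := precompCLM Sum.inr with hT2
  set G : ((ι ⊕ κ) → ℝ) → ℝ := fun x => g (T1 x) - g' (T2 x) with hG
  have hGc : ContDiff ℝ (⊤ : ℕ∞) G := (hg.comp T1.contDiff).sub (hg'.comp T2.contDiff)
  have key := smoothOver_general hX hΛo hΛΩ (0 : A) (Sum.elim as bs) G hGc ?_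
  · intro ψ hψ
    have h0 := key ψ hψ
    rw [map_zero, map_zero] at h0
    set P : (ι ⊕ κ) → ℝ := fun s => ψ (Sum.elim as bs s) with hP
    have hP1 : T1 P = fun i => ψ (as i) := rfl
    have hP2 : T2 P = fun j => ψ (bs j) := rfl
    have hfd : fderiv ℝ G P
        = ((fderiv ℝ g (fun i => ψ (as i))).comp T1)
          - ((fderiv ℝ g' (fun j => ψ (bs j))).comp T2) := by
      have d1 : DifferentiableAt ℝ (fun x => g (T1 x)) P :=
        ((hg.differentiable (by simp)).differentiableAt).comp P T1.differentiableAt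
      have d2 : DifferentiableAt ℝ (fun x => g' (T2 x)) P :=
        ((hg'.differentiable (by simp)).differentiableAt).comp P T2.differentiableAt
      rw [hG]
      rw [fderiv_fun_sub d1 d2]
      have c1 : fderiv ℝ (fun x => g (T1 x)) P
          = (fderiv ℝ g (fun i => ψ (as i))).comp T1 := by
        rw [show (fun x => g (T1 x)) = g ∘ T1 from rfl,
          fderiv_comp P ((hg.differentiable (by simp)).differentiableAt)
            T1.differentiableAt, T1.fderiv, hP1]
      have c2 : fderiv ℝ (fun x => g' (T2 x)) P
          = (fderiv ℝ g' (fun j => ψ (bs j))).comp T2 := by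
        rw [show (fun x => g' (T2 x)) = g' ∘ T2 from rfl,
          fderiv_comp P ((hg'.differentiable (by simp)).differentiableAt)
            T2.differentiableAt, T2.fderiv, hP2]
      rw [c1, c2]
    rw [hfd] at h0
    have hsum := h0
    rw [Fintype.sum_sum_type] at hsum
    have e1 : ∀ i : ι,
        ψ (X (Sum.elim as bs (Sum.inl i)))
          * (((fderiv ℝ g (fun i => ψ (as i))).comp T1)
            - ((fderiv ℝ g' (fun j => ψ (bs j))).comp T2)) (Pi.single (Sum.inl i) 1)
        = ψ (X (as i)) * fderiv ℝ g (fun i => ψ (as i)) (Pi.single i 1) := by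
      intro i
      have l1 : T1 (Pi.single (Sum.inl i) (1:ℝ)) = Pi.single i 1 :=
        precompCLM_single (e := (Sum.inl : ι → ι ⊕ κ)) Sum.inl_injective i
      have l2 : T2 (Pi.single (Sum.inl i) (1:ℝ)) = 0 :=
        precompCLM_single_notMem (fun j h => Sum.inr_ne_inl h)
      simp [ContinuousLinearMap.sub_apply, ContinuousLinearMap.comp_apply, l1, l2]
    have e2 : ∀ j : κ,
        ψ (X (Sum.elim as bs (Sum.inr j)))
          * (((fderiv ℝ g (fun i => ψ (as i))).comp T1)
            - ((fderiv ℝ g' (fun j => ψ (bs j))).comp T2)) (Pi.single (Sum.inr j) 1)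
        = -(ψ (X (bs j)) * fderiv ℝ g' (fun j => ψ (bs j)) (Pi.single j 1)) := by
      intro j
      have l1 : T1 (Pi.single (Sum.inr j) (1:ℝ)) = 0 :=
        precompCLM_single_notMem (fun i h => Sum.inl_ne_inr h)
      have l2 : T2 (Pi.single (Sum.inr j) (1:ℝ)) = Pi.single j 1 :=
        precompCLM_single (e := (Sum.inr : κ → ι ⊕ κ)) Sum.inr_injective j
      simp [ContinuousLinearMap.sub_apply, ContinuousLinearMap.comp_apply, l1, l2]
    rw [Finset.sum_congr rfl (fun i _ => e1 i), Finset.sum_congr rfl (fun j _ => e2 j),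
      Finset.sum_neg_distrib] at hsum
    linarith [hsum]
  · intro ψ hψ
    rw [map_zero, hG]
    have : (fun i => (fun s => ψ (Sum.elim as bs s)) i) = fun s => ψ (Sum.elim as bs s) := rfl
    show (0:ℝ) = g (T1 fun s => ψ (Sum.elim as bs s)) - g' (T2 fun s => ψ (Sum.elim as bs s))
    have h1 : T1 (fun s => ψ (Sum.elim as bs s)) = fun i => ψ (as i) := rfl
    have h2 : T2 (fun s => ψ (Sum.elim as bs s)) = fun j => ψ (bs j) := rfl
    rw [h1, h2, heq ψ hψ, sub_self]


/-- `f` has a local smooth representation at `φ` relative to `Ω`. -/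
def HasRep (Ω : Set (A →ₐ[ℝ] ℝ)) (f : (A →ₐ[ℝ] ℝ) → ℝ) (φ : A →ₐ[ℝ] ℝ) : Prop :=
  ∃ p : (k : ℕ) × (Fin k → A) × ((Fin k → ℝ) → ℝ),
    ContDiff ℝ (⊤ : ℕ∞) p.2.2 ∧ ∃ U : Set (A →ₐ[ℝ] ℝ), IsOpen U ∧ φ ∈ U ∧
      ∀ ψ ∈ U ∩ Ω, f ψ = p.2.2 (fun i => ψ (p.2.1 i))

open Classical in
/-- The candidate vector field associated to a derivation. -/
noncomputable def Lop (X : Derivation ℝ A A) (Ω : Set (A →ₐ[ℝ] ℝ))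
    (f : (A →ₐ[ℝ] ℝ) → ℝ) (φ : A →ₐ[ℝ] ℝ) : ℝ :=
  if h : HasRep Ω f φ then
    ∑ i, φ (X (h.choose.2.1 i))
      * fderiv ℝ h.choose.2.2 (fun i => φ (h.choose.2.1 i)) (Pi.single i 1)
  else 0

/-- Lemma C: evaluating `Lop` against any local representation. -/
lemma Lop_eq {X : Derivation ℝ A A} {Ω : Set (A →ₐ[ℝ] ℝ)} (hΩ : IsOpen Ω)
    (hX : SmoothOver X Ω) {f : (A →ₐ[ℝ] ℝ) → ℝ} {φ : A →ₐ[ℝ] ℝ} (hφ : φ ∈ Ω)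
    {ι : Type} [Fintype ι] [DecidableEq ι] (as : ι → A) (g : (ι → ℝ) → ℝ)
    (hg : ContDiff ℝ (⊤ : ℕ∞) g) {U : Set (A →ₐ[ℝ] ℝ)} (hUo : IsOpen U) (hφU : φ ∈ U)
    (hrep : ∀ ψ ∈ U ∩ Ω, f ψ = g (fun i => ψ (as i))) :
    Lop X Ω f φ
      = ∑ i, φ (X (as i)) * fderiv ℝ g (fun i => φ (as i)) (Pi.single i 1) := by
  classical
  have hhr : HasRep Ω f φ := by
    set e := Fintype.equivFin ι
    set T : (Fin (Fintype.card ι) → ℝ) →L[ℝ] (ι → ℝ) := precompCLM (fun i => e i)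
    refine ⟨⟨Fintype.card ι, fun j => as (e.symm j), fun x => g (T x)⟩,
      hg.comp T.contDiff, U, hUo, hφU, ?_⟩
    intro ψ hψ
    rw [hrep ψ hψ]
    congr 1
    funext i
    show ψ (as i) = ψ (as (e.symm (e i)))
    rw [Equiv.symm_apply_apply]
  unfold Lop
  rw [dif_pos hhr]
  obtain ⟨hg', U', hU'o, hφU', hrep'⟩ := hhr.choose_spec
  exact rep_welldef hX ((hU'o.inter hUo).inter hΩ) Set.inter_subset_right
    hhr.choose.2.1 hhr.choose.2.2 hg' as g hg
    (fun ψ hψ => by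
      rw [← hrep' ψ ⟨hψ.1.1, hψ.2⟩, hrep ψ ⟨hψ.1.2, hψ.2⟩])
    φ ⟨⟨hφU', hφU⟩, hφ⟩

/-- Evaluation maps belong to every structure sheaf. -/
lemma eval_mem_structureSheaf (a : A) (Ω : Set (A →ₐ[ℝ] ℝ)) :
    (fun ψ : A →ₐ[ℝ] ℝ => ψ a) ∈ structureSheaf Ω := by
  constructor
  · exact ((continuous_apply a).comp continuous_induced_dom).continuousOn
  · intro φ _
    exact ⟨Set.univ, isOpen_univ, Set.mem_univ _, 1, fun _ => a, fun x => x 0,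
      contDiff_apply ℝ ℝ (0 : Fin 1), fun ψ _ => rfl⟩

/-- Compatibility of `Lop` with the derivation. -/
lemma Lop_eval {X : Derivation ℝ A A} {Ω : Set (A →ₐ[ℝ] ℝ)} (hΩ : IsOpen Ω)
    (hX : SmoothOver X Ω) (a : A) {φ : A →ₐ[ℝ] ℝ} (hφ : φ ∈ Ω) :
    Lop X Ω (fun ψ => ψ a) φ = φ (X a) := by
  have h := Lop_eq hΩ hX hφ (ι := Fin 1) (fun _ => a)
    (fun x => x 0) (contDiff_apply ℝ ℝ (0 : Fin 1))
    isOpen_univ (Set.mem_univ φ) (fun ψ _ => rfl)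
  rw [h,
    show (fun x : Fin 1 → ℝ => x 0) = ⇑(ContinuousLinearMap.proj (R := ℝ) (0 : Fin 1))
      from rfl]
  rw [ContinuousLinearMap.fderiv]
  simp


/-- `Lop` is a vector field on `Ω`. -/
lemma Lop_isVectorFieldOn {X : Derivation ℝ A A} {Ω : Set (A →ₐ[ℝ] ℝ)}
    (hΩ : IsOpen Ω) (hX : SmoothOver X Ω) : IsVectorFieldOn (Lop X Ω) Ω := by
  classical
  intro Λ hΛo hΛΩ f k fs g _ hfs hg heq ψ hψ
  have hψΩ : ψ ∈ Ω := hΛΩ hψ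
  choose U hUo hψU m as h hsm hrep using fun i : Fin k => (hfs i).2 ψ hψΩ
  -- combined index type and data
  set ι := (i : Fin k) × Fin (m i) with hι
  set bs : ι → A := fun s => as s.1 s.2 with hbs
  set R : (i : Fin k) → ((ι → ℝ) →L[ℝ] (Fin (m i) → ℝ)) :=
    fun i => precompCLM (fun j => (⟨i, j⟩ : ι)) with hR
  set H : (ι → ℝ) → (Fin k → ℝ) := fun x i => h i (R i x) with hH
  set G : (ι → ℝ) → ℝ := fun x => g (H x) with hG
  have hGc : ContDiff ℝ (⊤ : ℕ∞) G :=
    hg.comp (contDiff_pi.2 fun i => (hsm i).comp (R i).contDiff)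
  -- the combined open set and representation of f
  set V : Set (A →ₐ[ℝ] ℝ) := Λ ∩ ⋂ i, U i with hV
  have hVo : IsOpen V := hΛo.inter (isOpen_iInter_of_finite hUo)
  have hψV : ψ ∈ V := ⟨hψ, Set.mem_iInter.2 hψU⟩
  -- points
  set P : ι → ℝ := fun s => ψ (bs s) with hP
  set p : (i : Fin k) → (Fin (m i) → ℝ) := fun i j => ψ (as i j) with hp
  set q : Fin k → ℝ := fun i => fs i ψ with hq
  have hRP : ∀ i, R i P = p i := fun i => rfl
  have hHP : H P = q := by
    funext i
    show h i (R i P) = fs i ψ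
    rw [hRP i, ← hrep i ψ ⟨hψU i, hψΩ⟩]
  have hfrep : ∀ ψ' ∈ V ∩ Ω, f ψ' = G (fun s => ψ' (bs s)) := by
    rintro ψ' ⟨⟨hψ'Λ, hψ'U⟩, hψ'Ω⟩
    rw [heq ψ' hψ'Λ]
    show g _ = g _
    congr 1
    funext i
    show fs i ψ' = h i (R i fun s => ψ' (bs s))
    rw [hrep i ψ' ⟨Set.mem_iInter.1 hψ'U i, hψ'Ω⟩]
    rfl
  -- evaluate Lop f
  have hLf := Lop_eq hΩ hX hψΩ bs G hGc hVo hψV hfrep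
  -- evaluate Lop (fs i)
  have hLfs : ∀ i : Fin k, Lop X Ω (fs i) ψ
      = ∑ j, ψ (X (as i j)) * fderiv ℝ (h i) (p i) (Pi.single j 1) :=
    fun i => Lop_eq hΩ hX hψΩ (as i) (h i) (hsm i) (hUo i) (hψU i) (hrep i)
  -- chain rule for G
  have hHdiff : DifferentiableAt ℝ H P := by
    apply differentiableAt_pi.2
    intro i
    exact (((hsm i).differentiable (by simp)).differentiableAt).comp P
      (R i).differentiableAt
  have hGfd : fderiv ℝ G P = (fderiv ℝ g q).comp (fderiv ℝ H P) := by
    rw [hG, show (fun x => g (H x)) = g ∘ H from rfl,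
      fderiv_comp P ((hg.differentiable (by simp)).differentiableAt) hHdiff, hHP]
  have hHfd : ∀ (i₀ : Fin k) (j₀ : Fin (m i₀)),
      fderiv ℝ H P (Pi.single (⟨i₀, j₀⟩ : ι) 1)
        = Pi.single i₀ (fderiv ℝ (h i₀) (p i₀) (Pi.single j₀ 1)) := by
    intro i₀ j₀
    have hfp : fderiv ℝ H P = ContinuousLinearMap.pi
        (fun i => fderiv ℝ (fun x => h i (R i x)) P) := by
      rw [hH]
      exact fderiv_pi (fun i =>
        (((hsm i).differentiable (by simp)).differentiableAt).comp P
          (R i).differentiableAt)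
    rw [hfp]
    funext i
    rw [ContinuousLinearMap.pi_apply]
    have hcomp : fderiv ℝ (fun x => h i (R i x)) P
        = (fderiv ℝ (h i) (p i)).comp (R i) := by
      rw [show (fun x => h i (R i x)) = h i ∘ (R i) from rfl,
        fderiv_comp P (((hsm i).differentiable (by simp)).differentiableAt)
          (R i).differentiableAt, (R i).fderiv, hRP i]
    rw [hcomp, ContinuousLinearMap.comp_apply]
    by_cases hii : i = i₀
    · subst hii
      have : R i (Pi.single (⟨i, j₀⟩ : ι) (1:ℝ)) = Pi.single j₀ 1 :=
        precompCLM_single (e := fun j => (⟨i, j⟩ : ι))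
          (fun x y hxy => eq_of_heq ((Sigma.mk.inj_iff.1 hxy).2)) j₀
      rw [this, Pi.single_eq_same]
    · have : R i (Pi.single (⟨i₀, j₀⟩ : ι) (1:ℝ)) = 0 :=
        precompCLM_single_notMem (fun j hj => hii (congrArg Sigma.fst hj))
      rw [this, map_zero, Pi.single_eq_of_ne hii]
  -- put everything together
  rw [hLf, hGfd]
  rw [← Finset.univ_sigma_univ, Finset.sum_sigma]
  refine Finset.sum_congr rfl fun i₀ _ => ?_
  rw [hLfs i₀, Finset.sum_mul]
  refine Finset.sum_congr rfl fun j₀ _ => ?_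
  rw [ContinuousLinearMap.comp_apply]
  show ψ (X (as i₀ j₀)) * fderiv ℝ g q (fderiv ℝ H P (Pi.single (⟨i₀, j₀⟩ : ι) 1))
    = ψ (X (as i₀ j₀)) * fderiv ℝ (h i₀) (p i₀) (Pi.single j₀ 1)
      * fderiv ℝ g q (Pi.single i₀ 1)
  rw [hHfd i₀ j₀]
  have : (Pi.single i₀ (fderiv ℝ (h i₀) (p i₀) (Pi.single j₀ 1)) : Fin k → ℝ)
      = (fderiv ℝ (h i₀) (p i₀) (Pi.single j₀ 1)) • (Pi.single i₀ (1:ℝ) : Fin k → ℝ) := by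
    rw [← Pi.single_smul, smul_eq_mul, mul_one]
  rw [this, map_smul, smul_eq_mul]
  ring

end Aux

/-- if the spectrum of `A` is a smooth manifold with structure sheaf
`S_A`, then every derivation `X` of `A` that is smooth over an open set `Ω` of the
spectrum is compatible with a unique vector field `X̂` on `Ω`, i.e. `X̂(â|_Ω) = (X a)^|_Ω`
for all `a ∈ A`. -/
theorem smoothOver_derivation_compatible_vectorField
    {A : Type*} [CommRing A] [Algebra ℝ A] {n : ℕ}
    (hman : IsSmoothManifoldWithStructureSheaf A n)
    (Ω : Set (A →ₐ[ℝ] ℝ)) (hΩ : IsOpen Ω)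
    (X : Derivation ℝ A A) (hX : SmoothOver X Ω) :
    ∃ L : ((A →ₐ[ℝ] ℝ) → ℝ) → ((A →ₐ[ℝ] ℝ) → ℝ),
      IsVectorFieldOn L Ω
      ∧ (∀ a : A, ∀ φ ∈ Ω, L (fun ψ => ψ a) φ = φ (X a))
      ∧ ∀ L' : ((A →ₐ[ℝ] ℝ) → ℝ) → ((A →ₐ[ℝ] ℝ) → ℝ),
          IsVectorFieldOn L' Ω → (∀ a : A, ∀ φ ∈ Ω, L' (fun ψ => ψ a) φ = φ (X a)) →
          ∀ f ∈ structureSheaf Ω, ∀ φ ∈ Ω, L f φ = L' f φ := by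
  refine ⟨Lop X Ω, Lop_isVectorFieldOn hΩ hX,
    fun a φ hφ => Lop_eval hΩ hX a hφ, ?_⟩
  intro L' hL' hcomp f hf φ hφ
  obtain ⟨U, hUo, hφU, k, as, g, hg, hrep⟩ := hf.2 φ hφ
  have h1 := Lop_eq hΩ hX hφ as g hg hUo hφU hrep
  have h2 := hL' (U ∩ Ω) (hUo.inter hΩ) Set.inter_subset_right f k
    (fun i ψ => ψ (as i)) g hf (fun i => eval_mem_structureSheaf (as i) Ω) hg
    (fun ψ hψ => hrep ψ hψ) φ ⟨hφU, hφ⟩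
  rw [h1, h2]
  exact Finset.sum_congr rfl fun i _ => by rw [hcomp (as i) φ hφ]
end

section
/- Let A be a commutative real algebra whose spectrum is a smooth manifold with structure sheaf S_A, and let Ω be an open subset of the spectrum whose complement has empty interior. Then every derivation of A that is smooth over Ω is smooth over the whole spectrum. -/
/-- if the spectrum of `A` is a smooth manifold with `S_A` its sheaf of
smooth functions and `Ω` is an open subset of the spectrum whose complement has empty
interior, then every derivation of `A` that is smooth over `Ω` is smooth over the full
spectrum. -/
theorem smoothOver_of_dense
    {A : Type*} [CommRing A] [Algebra ℝ A] {n : ℕ}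
    (hman : IsSmoothManifoldWithStructureSheaf A n)
    (Ω : Set (A →ₐ[ℝ] ℝ)) (hΩ : IsOpen Ω)
    (hdense : interior Ωᶜ = ∅)
    (X : Derivation ℝ A A) (hX : SmoothOver X Ω) :
    SmoothOver X Set.univ := by
  intro Λ hΛ _ a k as g hg hid ψ hψ
  have hevalcont : ∀ b : A, Continuous fun φ : A →ₐ[ℝ] ℝ => φ b := fun b =>
    (continuous_apply b).comp continuous_induced_dom
  have hΩdense : Dense Ω := by
    rw [dense_iff_closure_eq, ← compl_compl (closure Ω), ← interior_compl, hdense, Set.compl_empty]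
  set F : (A →ₐ[ℝ] ℝ) → ℝ := fun φ => φ (X a) with hFdef
  set G : (A →ₐ[ℝ] ℝ) → ℝ := fun φ =>
    ∑ i, φ (X (as i)) * fderiv ℝ g (fun i => φ (as i)) (Pi.single i 1) with hGdef
  have hF : Continuous F := hevalcont _
  have hG : Continuous G := by
    apply continuous_finset_sum
    intro i _
    refine (hevalcont _).mul ?_
    have h1 : Continuous fun φ : A →ₐ[ℝ] ℝ => (fun j => φ (as j)) :=
      continuous_pi fun j => hevalcont _
    have h2 : Continuous (fderiv ℝ g) := hg.continuous_fderiv (by simp)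
    exact (h2.comp h1).clm_apply continuous_const
  have heq : Set.EqOn F G (Λ ∩ Ω) := fun φ hφ =>
    hX (Λ ∩ Ω) (hΛ.inter hΩ) Set.inter_subset_right a k as g hg
      (fun χ hχ => hid χ hχ.1) φ hφ
  have hcl : Set.EqOn F G (closure (Λ ∩ Ω)) :=
    heq.closure hF hG
  have hsub : Λ ⊆ closure (Λ ∩ Ω) := by
    intro x hx
    rw [mem_closure_iff]
    intro t ht hxt
    obtain ⟨y, hy⟩ := hΩdense.inter_open_nonempty (t ∩ Λ) (ht.inter hΛ) ⟨x, hxt, hx⟩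
    exact ⟨y, hy.1.1, hy.1.2, hy.2⟩
  exact hcl (hsub hψ)
end

section
/- Let 𝔤_m ⊆ 𝔥_m be nilpotent Lie algebras acting compatibly on an algebra A with a character ε satisfying ε(δ_X(a)) = 0 for all X ∈ 𝔤_m and a ∈ A. Then the image of the orbit homomorphism A → A(H_m) associated to ε consists of functions invariant under right translation by the subgroup G_m = exp(𝔤_m), i.e. the orbit map factors through A(H_m/G_m). -/
/-!
Every generator `exp ξ` with `ξ ∈ 𝔤` fixes `ε`: applying `ε` to the terminating exponential
series `∑ Dⁿ a / n!` kills every term with `n ≥ 1`, since each lies in the range of `δ ξ`.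
The elements `g` with `ε ∘ ρ g = ε` form a subgroup, hence it contains `G_m`, and
`ε (ρ (h g)⁻¹ a) = ε (ρ g⁻¹ (ρ h⁻¹ a)) = ε (ρ h⁻¹ a)`.
-/

theorem LinearMap.map_sum_range_exp_of_map_apply_eq_zero {𝕜 M N : Type*} [DivisionRing 𝕜]
    [AddCommGroup M] [Module 𝕜 M] [AddCommGroup N] [Module 𝕜 N]
    (f : M →ₗ[𝕜] N) (D : Module.End 𝕜 M) (hf : ∀ x, f (D x) = 0) {a : M} {n : ℕ}
    (hn : (D ^ n) a = 0) :
    f (∑ k ∈ Finset.range n, (k.factorial : 𝕜)⁻¹ • (D ^ k) a) = f a := by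
  cases n with
  | zero => simp_all
  | succ n =>
    have hterm : ∀ k ∈ Finset.range n, f (((k + 1).factorial : 𝕜)⁻¹ • (D ^ (k + 1)) a) = 0 := by
      intro k _
      rw [map_smul, pow_succ', Module.End.mul_apply, hf, smul_zero]
    rw [map_sum, Finset.sum_range_succ', Finset.sum_eq_zero hterm]
    simp

section InvariantSubgroup

variable {R A H X : Type*} [CommSemiring R] [Semiring A] [Algebra R A] [Group H]

def invariantSubgroup (ρ : H →* (A ≃ₐ[R] A)) (ε : A → X) : Subgroup H where
  carrier := {g | ∀ a, ε (ρ g a) = ε a}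
  one_mem' a := by simp
  mul_mem' {g g'} hg hg' a := by rw [map_mul, AlgEquiv.mul_apply, hg, hg']
  inv_mem' {g} hg a := by
    rw [← hg (ρ g⁻¹ a), ← AlgEquiv.mul_apply, ← map_mul, mul_inv_cancel, map_one,
      AlgEquiv.one_apply]

theorem mem_invariantSubgroup {ρ : H →* (A ≃ₐ[R] A)} {ε : A → X} {g : H} :
    g ∈ invariantSubgroup ρ ε ↔ ∀ a, ε (ρ g a) = ε a :=
  Iff.rfl

end InvariantSubgroup

theorem orbit_map_right_invariant_general
    {A : Type*} [CommRing A] [Algebra ℝ A]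
    {𝔥 : Type*} [LieRing 𝔥] [LieAlgebra ℝ 𝔥]
    (𝔤 : LieSubalgebra ℝ 𝔥)
    (δ : 𝔥 →ₗ[ℝ] Module.End ℝ A)
    {H : Type*} [Group H] (expmap : 𝔥 → H)
    (ρ : H →* (A ≃ₐ[ℝ] A))
    (hexp : ∀ (ξ : 𝔥) (a : A), ∃ N : ℕ, ((δ ξ) ^ N) a = 0 ∧
      ρ (expmap ξ) a = ∑ n ∈ Finset.range N, ((n.factorial : ℝ)⁻¹) • ((δ ξ) ^ n) a)
    (ε : A →ₐ[ℝ] ℝ)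
    (hann : ∀ ξ ∈ 𝔤, ∀ a : A, ε (δ ξ a) = 0) :
    ∀ a : A, ∀ h : H, ∀ g ∈ Subgroup.closure (expmap '' (𝔤 : Set 𝔥)),
      ε (ρ (h * g)⁻¹ a) = ε (ρ h⁻¹ a) := by
  have hG : Subgroup.closure (expmap '' (𝔤 : Set 𝔥)) ≤ invariantSubgroup ρ ε := by
    rw [Subgroup.closure_le]
    rintro _ ⟨ξ, hξ, rfl⟩ b
    obtain ⟨N, hN, hsum⟩ := hexp ξ b
    rw [hsum]
    exact ε.toLinearMap.map_sum_range_exp_of_map_apply_eq_zero (δ ξ) (hann ξ hξ) hN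
  intro a h g hg
  rw [mul_inv_rev, map_mul, AlgEquiv.mul_apply, mem_invariantSubgroup.1 (hG (inv_mem hg))]

/-- let `𝔤_m ⊆ 𝔥_m` be nilpotent Lie algebras acting compatibly (by
derivations `δ`, exponentiating to an action `ρ` of the unipotent group `H_m` by
algebra automorphisms) on a commutative real algebra `A`, with a character `ε`
satisfying `ε(δ_X(a)) = 0` for all `X ∈ 𝔤_m` and `a ∈ A`.  Then the image of the orbit
homomorphism `Θ : a ↦ [h ↦ ε(h⁻¹(a))]` associated to `ε` consists of functions on
`H_m` invariant under right translation by the subgroup `G_m = exp(𝔤_m)`: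
`Θ(a)(hg) = Θ(a)(h)` for all `g ∈ G_m`.  Hence the orbit map factors through the
algebra of functions on the homogeneous space `H_m/G_m`. -/
theorem orbit_map_right_invariant
    {A : Type*} [CommRing A] [Algebra ℝ A]
    {𝔥 : Type*} [LieRing 𝔥] [LieAlgebra ℝ 𝔥] [FiniteDimensional ℝ 𝔥]
    [LieRing.IsNilpotent 𝔥]
    (𝔤 : LieSubalgebra ℝ 𝔥)
    (δ : 𝔥 →ₗ[ℝ] Module.End ℝ A)
    (hder : ∀ (ξ : 𝔥) (a b : A), δ ξ (a * b) = δ ξ a * b + a * δ ξ b)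
    (hlie : ∀ ξ η : 𝔥, δ ⁅ξ, η⁆ = δ ξ * δ η - δ η * δ ξ)
    {H : Type*} [Group H] (expmap : 𝔥 → H)
    (hgen : Subgroup.closure (Set.range expmap) = ⊤)
    (ρ : H →* (A ≃ₐ[ℝ] A))
    (hexp : ∀ (ξ : 𝔥) (a : A), ∃ N : ℕ, ((δ ξ) ^ N) a = 0 ∧
      ρ (expmap ξ) a = ∑ n ∈ Finset.range N, ((n.factorial : ℝ)⁻¹) • ((δ ξ) ^ n) a)
    (ε : A →ₐ[ℝ] ℝ)
    (hann : ∀ ξ ∈ 𝔤, ∀ a : A, ε (δ ξ a) = 0) :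
    ∀ a : A, ∀ h : H, ∀ g ∈ Subgroup.closure (expmap '' (𝔤 : Set 𝔥)),
      ε (ρ (h * g)⁻¹ a) = ε (ρ h⁻¹ a) :=
  orbit_map_right_invariant_general 𝔤 δ expmap ρ hexp ε hann
end
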